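/- arXiv:1803.09488 — 2 statements merged into one kernel-verified Lean document; each statement's English description precedes it below -/
import Mathlib

section
/- Under the pseudo-regression setup, assume additionally that |v(z)| ≤ A for μ-almost every z and that E[(V⁽¹⁾ − v(U⁽¹⁾))² | U⁽¹⁾] ≤ σ² almost surely. Then for every k = 1,…,K the variance of the k-th empirical moment satisfies Var[((1/M)·𝕄ᵀ𝕐)_k] ≤ (σ² + A²)·G_{kk}/M. -/
/-!
Write `w = v(U)`. Since `E[V | U] = w`, the conditional variance identity gives
`E[V² | U] = E[(V - w)² | U] + w² ≤ σ² + A²`. The factor `ψ_k(U)²` is `U`-measurable, so it can be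
pulled out of the conditional expectation; doing this with the Lebesgue conditional expectation
`P⁻[·|m]` avoids knowing beforehand that `ψ_k(U)² V²` is integrable, and yields
`E[(ψ_k(U) V)²] ≤ (σ² + A²) G_kk`. The summands `ψ_k(U⁽ᵐ⁾) V⁽ᵐ⁾` are independent and identically
distributed, so the variance of their mean is their common variance divided by `M`, and a variance
is at most the second moment.
-/

open MeasureTheory ProbabilityTheory Matrix

open scoped ENNReal

section ConditionalMoments

variable {Ω : Type*} {m mΩ : MeasurableSpace Ω} {P : Measure Ω}

theorem lintegral_mul_condLExp (hm : m ≤ mΩ) [SigmaFinite (P.trim hm)] {f g : Ω → ℝ≥0∞}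
    (hf : Measurable[m] f) (hg : AEMeasurable g P) :
    ∫⁻ ω, f ω * P⁻[g|m] ω ∂P = ∫⁻ ω, f ω * g ω ∂P := by
  have htrim : (P.withDensity P⁻[g|m]).trim hm = (P.withDensity g).trim hm := by
    refine @Measure.ext _ m _ _ fun s hs => ?_
    rw [trim_measurableSet_eq hm hs, trim_measurableSet_eq hm hs, withDensity_apply _ (hm s hs),
      withDensity_apply _ (hm s hs), setLIntegral_condLExp hm P g hs]
  have hf' : Measurable f := hf.mono hm le_rfl
  calc ∫⁻ ω, f ω * P⁻[g|m] ω ∂P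
      = ∫⁻ ω, f ω ∂(P.withDensity P⁻[g|m]) := by
        rw [lintegral_withDensity_eq_lintegral_mul₀
          (measurable_condLExp' m P g).aemeasurable hf'.aemeasurable]
        simp only [Pi.mul_apply, mul_comm]
    _ = ∫⁻ ω, f ω ∂(P.withDensity g) := by
        rw [← lintegral_trim hm hf, htrim, lintegral_trim hm hf]
    _ = ∫⁻ ω, f ω * g ω ∂P := by
        rw [lintegral_withDensity_eq_lintegral_mul₀ hg hf'.aemeasurable]
        simp only [Pi.mul_apply, mul_comm]

theorem lintegral_mul_le_of_condLExp_le (hm : m ≤ mΩ) [SigmaFinite (P.trim hm)]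
    {f g : Ω → ℝ≥0∞} {c : ℝ≥0∞} (hf : Measurable[m] f) (hg : AEMeasurable g P)
    (hc : P⁻[g|m] ≤ᵐ[P] fun _ => c) :
    ∫⁻ ω, f ω * g ω ∂P ≤ c * ∫⁻ ω, f ω ∂P := by
  rw [← lintegral_mul_condLExp hm hf hg, ← lintegral_const_mul c (hf.mono hm le_rfl)]
  refine lintegral_mono_ae (hc.mono fun ω hω => ?_)
  rw [mul_comm c]
  gcongr

variable [IsFiniteMeasure P] {f V w : Ω → ℝ} {A C σ : ℝ}

theorem lintegral_sq_mul_le_of_condExp_sq_le (hm : m ≤ mΩ) (hf : StronglyMeasurable[m] f)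
    (hV : MemLp V 2 P) (hC : P[V ^ 2|m] ≤ᵐ[P] fun _ => C) :
    ∫⁻ ω, ENNReal.ofReal ((f ω * V ω) ^ 2) ∂P
      ≤ ENNReal.ofReal C * ∫⁻ ω, ENNReal.ofReal (f ω ^ 2) ∂P := by
  have hcond : P⁻[fun ω => ENNReal.ofReal (V ω ^ 2)|m] ≤ᵐ[P] fun _ => ENNReal.ofReal C := by
    filter_upwards [condLExp_ofReal m hV.integrable_sq (ae_of_all _ fun ω => sq_nonneg (V ω)), hC]
      with ω hω hCω
    exact hω.trans_le (ENNReal.ofReal_le_ofReal hCω)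
  simp_rw [mul_pow, ENNReal.ofReal_mul (sq_nonneg _)]
  exact lintegral_mul_le_of_condLExp_le hm (hf.measurable.pow_const 2).ennreal_ofReal
    (hV.aestronglyMeasurable.aemeasurable.pow_const 2).ennreal_ofReal hcond

theorem memLp_two_mul_of_condExp_sq_le (hm : m ≤ mΩ) (hf : StronglyMeasurable[m] f)
    (hfL2 : MemLp f 2 P) (hV : MemLp V 2 P) (hC : P[V ^ 2|m] ≤ᵐ[P] fun _ => C) :
    MemLp (fun ω => f ω * V ω) 2 P := by
  have hmeas : AEStronglyMeasurable (fun ω => f ω * V ω) P :=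
    hfL2.aestronglyMeasurable.mul hV.aestronglyMeasurable
  refine (memLp_two_iff_integrable_sq hmeas).2 ⟨hmeas.pow 2, ?_⟩
  rw [hasFiniteIntegral_iff_ofReal (ae_of_all _ fun ω => sq_nonneg _)]
  exact (lintegral_sq_mul_le_of_condExp_sq_le hm hf hV hC).trans_lt
    (ENNReal.mul_lt_top ENNReal.ofReal_lt_top hfL2.integrable_sq.lintegral_lt_top)

theorem integral_sq_mul_le_of_condExp_sq_le (hm : m ≤ mΩ) (hf : StronglyMeasurable[m] f)
    (hfL2 : MemLp f 2 P) (hV : MemLp V 2 P) (hC : P[V ^ 2|m] ≤ᵐ[P] fun _ => C) (hC0 : 0 ≤ C) :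
    ∫ ω, (f ω * V ω) ^ 2 ∂P ≤ C * ∫ ω, f ω ^ 2 ∂P := by
  calc ∫ ω, (f ω * V ω) ^ 2 ∂P
      = (∫⁻ ω, ENNReal.ofReal ((f ω * V ω) ^ 2) ∂P).toReal :=
        integral_eq_lintegral_of_nonneg_ae (ae_of_all _ fun ω => sq_nonneg _)
          ((hfL2.aestronglyMeasurable.mul hV.aestronglyMeasurable).pow 2)
    _ ≤ (ENNReal.ofReal C * ∫⁻ ω, ENNReal.ofReal (f ω ^ 2) ∂P).toReal :=
        ENNReal.toReal_mono
          (ENNReal.mul_ne_top ENNReal.ofReal_ne_top hfL2.integrable_sq.lintegral_lt_top.ne)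
          (lintegral_sq_mul_le_of_condExp_sq_le hm hf hV hC)
    _ = C * ∫ ω, f ω ^ 2 ∂P := by
        rw [ENNReal.toReal_mul, ENNReal.toReal_ofReal hC0, integral_eq_lintegral_of_nonneg_ae
          (ae_of_all _ fun ω => sq_nonneg _) (hfL2.aestronglyMeasurable.pow 2)]

theorem condExp_sq_ae_eq_condExp_sub_sq_add_sq (hm : m ≤ mΩ) (hV : MemLp V 2 P)
    (hw : P[V|m] =ᵐ[P] w) :
    P[V ^ 2|m] =ᵐ[P] P[(V - w) ^ 2|m] + w ^ 2 := by
  have hvar : P[(V - w) ^ 2|m] =ᵐ[P] Var[V; P | m] :=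
    condExp_congr_ae (by filter_upwards [hw] with ω hω; simp [hω])
  filter_upwards [hvar, condVar_ae_eq_condExp_sq_sub_sq_condExp hm hV, hw] with ω h1 h2 h3
  simp only [Pi.add_apply, Pi.sub_apply, Pi.pow_apply] at h1 h2 h3 ⊢
  rw [h1, h2, h3]
  ring

theorem condExp_sq_le_of_condExp_sub_sq_le (hm : m ≤ mΩ) (hV : MemLp V 2 P)
    (hw : P[V|m] =ᵐ[P] w) (hσ : P[(V - w) ^ 2|m] ≤ᵐ[P] fun _ => σ ^ 2)
    (hA : ∀ᵐ ω ∂P, |w ω| ≤ A) :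
    P[V ^ 2|m] ≤ᵐ[P] fun _ => σ ^ 2 + A ^ 2 := by
  filter_upwards [condExp_sq_ae_eq_condExp_sub_sq_add_sq hm hV hw, hσ, hA] with ω h hσω hAω
  rw [h, Pi.add_apply, Pi.pow_apply, ← sq_abs (w ω)]
  gcongr

end ConditionalMoments

theorem variance_mean_eq_div_of_identDistrib {Ω ι : Type*} [MeasurableSpace Ω] {P : Measure Ω}
    [Fintype ι] {X : ι → Ω → ℝ} {Y : Ω → ℝ} (hY : MemLp Y 2 P)
    (hindep : Pairwise fun i j => IndepFun (X i) (X j) P)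
    (hident : ∀ i, IdentDistrib (X i) Y P P) :
    variance (fun ω => (Fintype.card ι : ℝ)⁻¹ * ∑ i, X i ω) P
      = variance Y P / Fintype.card ι := by
  have hsum : variance (fun ω => ∑ i, X i ω) P = Fintype.card ι * variance Y P := by
    simp_rw [← Finset.sum_apply, IndepFun.variance_sum (fun i _ => (hident i).symm.memLp_snd hY)
      (fun i _ j _ hij => hindep hij), (hident _).variance_eq]
    simp
  rw [variance_const_mul, hsum]
  rcases eq_or_ne (Fintype.card ι : ℝ) 0 with h | h
  · simp [h]
  · field_simp

theorem empirical_moment_variance_bound_general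
    (n K M : ℕ) (hM : 0 < M)
    (μ : Measure (Fin n → ℝ))
    (ψ : Fin K → (Fin n → ℝ) → ℝ)
    (hψmeas : ∀ k, Measurable (ψ k))
    (hψL2 : ∀ k, MemLp (ψ k) 2 μ)
    (G : Matrix (Fin K) (Fin K) ℝ)
    (hGdef : ∀ k l, G k l = ∫ z, ψ k z * ψ l z ∂μ)
    (Ω : Type*) [MeasurableSpace Ω] (P : Measure Ω) [IsProbabilityMeasure P]
    (U : Fin M → Ω → (Fin n → ℝ)) (V : Fin M → Ω → ℝ)
    (hUmeas : ∀ m, Measurable (U m))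
    (hindep : iIndepFun (fun m ω => (U m ω, V m ω)) P)
    (hident : ∀ m, IdentDistrib (fun ω => (U m ω, V m ω))
      (fun ω => (U ⟨0, hM⟩ ω, V ⟨0, hM⟩ ω)) P P)
    (hlaw : Measure.map (U ⟨0, hM⟩) P = μ)
    (hVL2 : MemLp (V ⟨0, hM⟩) 2 P)
    (v : (Fin n → ℝ) → ℝ)
    (hcond : P[(fun ω => V ⟨0, hM⟩ ω) |
        MeasurableSpace.comap (U ⟨0, hM⟩) inferInstance]
      =ᵐ[P] fun ω => v (U ⟨0, hM⟩ ω))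
    (A σ : ℝ)
    -- |v| ≤ A μ-a.e.
    (hA : ∀ᵐ z ∂μ, |v z| ≤ A)
    -- conditional variance bound E[(V⁽¹⁾ - v(U⁽¹⁾))² | U⁽¹⁾] ≤ σ² a.s.
    (hσ : ∀ᵐ ω ∂P, (P[(fun ω' => (V ⟨0, hM⟩ ω' - v (U ⟨0, hM⟩ ω'))^2) |
        MeasurableSpace.comap (U ⟨0, hM⟩) inferInstance]) ω ≤ σ^2) :
    ∀ k : Fin K,
      variance (fun ω => (M : ℝ)⁻¹ * ∑ m, ψ k (U m ω) * V m ω) P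
        ≤ (σ^2 + A^2) * G k k / M := by
  intro k
  set U₀ := U ⟨0, hM⟩
  set V₀ := V ⟨0, hM⟩
  have hU₀ : Measurable U₀ := hUmeas _
  have hm : MeasurableSpace.comap U₀ inferInstance ≤ ‹MeasurableSpace Ω› := hU₀.comap_le
  have hψU : StronglyMeasurable[MeasurableSpace.comap U₀ inferInstance] (fun ω => ψ k (U₀ ω)) :=
    ((hψmeas k).comp (comap_measurable U₀)).stronglyMeasurable
  have hψUL2 : MemLp (fun ω => ψ k (U₀ ω)) 2 P :=
    (hlaw ▸ hψL2 k).comp_of_map hU₀.aemeasurable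
  have hAP : ∀ᵐ ω ∂P, |v (U₀ ω)| ≤ A := ae_of_ae_map hU₀.aemeasurable (hlaw ▸ hA)
  have hV2 := condExp_sq_le_of_condExp_sub_sq_le hm hVL2 hcond hσ hAP
  have hmeas : Measurable fun p : (Fin n → ℝ) × ℝ => ψ k p.1 * p.2 :=
    ((hψmeas k).comp measurable_fst).mul measurable_snd
  have hGkk : ∫ ω, ψ k (U₀ ω) ^ 2 ∂P = G k k := by
    rw [hGdef, ← hlaw, integral_map hU₀.aemeasurable
      (((hψmeas k).mul (hψmeas k)).aestronglyMeasurable (f := fun z => ψ k z * ψ k z))]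
    simp only [sq]
  have hX₀ := memLp_two_mul_of_condExp_sq_le hm hψU hψUL2 hVL2 hV2
  have hmean := variance_mean_eq_div_of_identDistrib hX₀
    (fun i j hij => (hindep.indepFun hij).comp hmeas hmeas) (fun m => (hident m).comp hmeas)
  simp only [Fintype.card_fin, Function.comp_def] at hmean
  rw [hmean]
  gcongr
  calc variance (fun ω => ψ k (U₀ ω) * V₀ ω) P
      ≤ ∫ ω, (ψ k (U₀ ω) * V₀ ω) ^ 2 ∂P := variance_le_expectation_sq hX₀.aestronglyMeasurable
    _ ≤ (σ ^ 2 + A ^ 2) * ∫ ω, ψ k (U₀ ω) ^ 2 ∂P :=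
        integral_sq_mul_le_of_condExp_sq_le hm hψU hψUL2 hVL2 hV2 (by positivity)
    _ = (σ ^ 2 + A ^ 2) * G k k := by rw [hGkk]

/-- variance bound for the empirical moments,
`Var[((1/M)·𝕄ᵀ𝕐)_k] ≤ (σ² + A²)·G_{kk}/M`. -/
theorem empirical_moment_variance_bound
    (n K M : ℕ) (hn : 0 < n) (hK : 0 < K) (hM : 0 < M)
    (μ : Measure (Fin n → ℝ)) [IsProbabilityMeasure μ]
    (ψ : Fin K → (Fin n → ℝ) → ℝ)
    (hψmeas : ∀ k, Measurable (ψ k))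
    (hψL2 : ∀ k, MemLp (ψ k) 2 μ)
    (G : Matrix (Fin K) (Fin K) ℝ)
    (hGdef : ∀ k l, G k l = ∫ z, ψ k z * ψ l z ∂μ)
    (hGinv : IsUnit G.det)
    (Ω : Type*) [MeasurableSpace Ω] (P : Measure Ω) [IsProbabilityMeasure P]
    (U : Fin M → Ω → (Fin n → ℝ)) (V : Fin M → Ω → ℝ)
    (hUmeas : ∀ m, Measurable (U m)) (hVmeas : ∀ m, Measurable (V m))
    (hindep : iIndepFun (fun m ω => (U m ω, V m ω)) P)
    (hident : ∀ m, IdentDistrib (fun ω => (U m ω, V m ω))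
      (fun ω => (U ⟨0, hM⟩ ω, V ⟨0, hM⟩ ω)) P P)
    (hlaw : Measure.map (U ⟨0, hM⟩) P = μ)
    (hVL2 : MemLp (V ⟨0, hM⟩) 2 P)
    (v : (Fin n → ℝ) → ℝ) (hvmeas : Measurable v)
    (hcond : P[(fun ω => V ⟨0, hM⟩ ω) |
        MeasurableSpace.comap (U ⟨0, hM⟩) inferInstance]
      =ᵐ[P] fun ω => v (U ⟨0, hM⟩ ω))
    (A σ : ℝ)
    -- |v| ≤ A μ-a.e.
    (hA : ∀ᵐ z ∂μ, |v z| ≤ A)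
    -- conditional variance bound E[(V⁽¹⁾ - v(U⁽¹⁾))² | U⁽¹⁾] ≤ σ² a.s.
    (hσ : ∀ᵐ ω ∂P, (P[(fun ω' => (V ⟨0, hM⟩ ω' - v (U ⟨0, hM⟩ ω'))^2) |
        MeasurableSpace.comap (U ⟨0, hM⟩) inferInstance]) ω ≤ σ^2) :
    ∀ k : Fin K,
      variance (fun ω => (M : ℝ)⁻¹ * ∑ m, ψ k (U m ω) * V m ω) P
        ≤ (σ^2 + A^2) * G k k / M :=
  empirical_moment_variance_bound_general n K M hM μ ψ hψmeas hψL2 G hGdef Ω P U V hUmeas hindep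
    hident hlaw hVL2 v hcond A σ hA hσ
end

section
/- Let N be a nonnegative random variable, σ > 0, λ > 0, r₀ ≥ 0 and α ≥ 0. Suppose that P(N > r) ≤ 1 − Φ(α + r/(2σ)) holds for all r ≥ r₀, where Φ is the standard normal cumulative distribution function. Then E[exp(λN)] ≤ exp(λr₀) + √(2π)·σ·λ·exp(2λ²σ²). -/
/-! By the layer-cake formula, `E[exp(λN)] = 1 + ∫₀^∞ λ e^{λt} P(N > t) dt`. On `(0, r₀]` the
probability is at most `1`, which contributes `e^{λr₀} - 1`. Beyond `r₀` the hypothesis and the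
Gaussian tail bound `1 - Φ(x) ≤ e^{-x²/2}/2` (for `x ≥ 0`, and with `α ≥ 0` discarded) give
`P(N > t) ≤ e^{-t²/(8σ²)}/2`, and the remaining Gaussian integral
`(λ/2) ∫ e^{λt - t²/(8σ²)} dt` is computed by completing the square. -/

open MeasureTheory Real

/-- The cumulative distribution function of the standard normal distribution,
`Φ(x) = (2π)^{−1/2} ∫_{−∞}^{x} e^{−t²/2} dt`. -/
noncomputable def stdNormalCDF (x : ℝ) : ℝ :=
  (Real.sqrt (2 * Real.pi))⁻¹ * ∫ t in Set.Iic x, Real.exp (-t^2 / 2)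

open Set

theorem setIntegral_Ioi_comp_add_right {E : Type*} [NormedAddCommGroup E] [NormedSpace ℝ E]
    (f : ℝ → E) (x : ℝ) : ∫ s in Ioi 0, f (s + x) = ∫ t in Ioi x, f t := by
  simpa only [preimage_add_const_Ioi, sub_self] using
    (measurePreserving_add_right volume x).setIntegral_preimage_emb
      (measurableEmbedding_addRight x) f (Ioi x)

theorem neg_sq_div_two_eq (t : ℝ) : -t ^ 2 / 2 = -(1 / 2) * t ^ 2 := by ring

theorem integrable_exp_neg_sq_div_two : Integrable fun t : ℝ => exp (-t ^ 2 / 2) := by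
  simpa only [neg_sq_div_two_eq] using integrable_exp_neg_mul_sq (by norm_num : (0 : ℝ) < 1 / 2)

theorem integral_exp_neg_sq_div_two : ∫ t, exp (-t ^ 2 / 2) = √(2 * π) := by
  simp_rw [neg_sq_div_two_eq]
  rw [integral_gaussian, div_div_eq_mul_div, div_one, mul_comm]

theorem integral_Ioi_exp_neg_sq_div_two : ∫ t in Ioi 0, exp (-t ^ 2 / 2) = √(2 * π) / 2 := by
  simp_rw [neg_sq_div_two_eq]
  rw [integral_gaussian_Ioi, div_div_eq_mul_div, div_one, mul_comm]

theorem one_sub_stdNormalCDF (x : ℝ) :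
    1 - stdNormalCDF x = (√(2 * π))⁻¹ * ∫ t in Ioi x, exp (-t ^ 2 / 2) := by
  have hsplit := intervalIntegral.integral_Iic_add_Ioi (b := x)
    integrable_exp_neg_sq_div_two.integrableOn integrable_exp_neg_sq_div_two.integrableOn
  rw [integral_exp_neg_sq_div_two] at hsplit
  have hpos : 0 < √(2 * π) := by positivity
  calc 1 - stdNormalCDF x
      = (√(2 * π))⁻¹ * ((∫ t in Iic x, exp (-t ^ 2 / 2)) + ∫ t in Ioi x, exp (-t ^ 2 / 2))
        - (√(2 * π))⁻¹ * ∫ t in Iic x, exp (-t ^ 2 / 2) := by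
        rw [hsplit, inv_mul_cancel₀ hpos.ne', stdNormalCDF]
    _ = _ := by ring

/-- Since `(s + x)² ≥ s² + x²` for `s, x ≥ 0`, shifting the tail integral from `x` to `0` costs
at most a factor `e^{-x²/2}`. -/
theorem one_sub_stdNormalCDF_le {x : ℝ} (hx : 0 ≤ x) :
    1 - stdNormalCDF x ≤ exp (-x ^ 2 / 2) / 2 := by
  have hshift :
      ∫ t in Ioi x, exp (-t ^ 2 / 2) ≤ exp (-x ^ 2 / 2) * ∫ s in Ioi 0, exp (-s ^ 2 / 2) := by
    rw [← setIntegral_Ioi_comp_add_right, ← integral_const_mul]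
    refine setIntegral_mono_on ?_ ?_ measurableSet_Ioi fun s (hs : 0 < s) => ?_
    · exact (integrable_exp_neg_sq_div_two.comp_add_right x).integrableOn
    · exact (integrable_exp_neg_sq_div_two.const_mul _).integrableOn
    · rw [← exp_add, exp_le_exp]
      nlinarith
  rw [integral_Ioi_exp_neg_sq_div_two] at hshift
  have hpos : 0 < √(2 * π) := by positivity
  rw [one_sub_stdNormalCDF]
  calc (√(2 * π))⁻¹ * ∫ t in Ioi x, exp (-t ^ 2 / 2)
      ≤ (√(2 * π))⁻¹ * (exp (-x ^ 2 / 2) * (√(2 * π) / 2)) := by gcongr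
    _ = exp (-x ^ 2 / 2) / 2 := by field_simp

theorem one_sub_stdNormalCDF_add_div_le {α σ t : ℝ} (hα : 0 ≤ α) (hσ : 0 < σ) (ht : 0 ≤ t) :
    1 - stdNormalCDF (α + t / (2 * σ)) ≤ exp (-(8 * σ ^ 2)⁻¹ * t ^ 2) / 2 := by
  refine (one_sub_stdNormalCDF_le (by positivity)).trans ?_
  rw [show -(8 * σ ^ 2)⁻¹ * t ^ 2 = -(t / (2 * σ)) ^ 2 / 2 by field_simp; ring]
  gcongr
  exact le_add_of_nonneg_left hα

theorem intervalIntegral_mul_exp_mul (lam y : ℝ) :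
    ∫ t in 0..y, lam * exp (lam * t) = exp (lam * y) - 1 := by
  rw [intervalIntegral.integral_eq_sub_of_hasDerivAt (f := fun t => exp (lam * t))]
  · simp
  · intro t _
    simpa [mul_comm] using ((hasDerivAt_id t).const_mul lam).exp
  · exact (by fun_prop : Continuous fun t => lam * exp (lam * t)).intervalIntegrable _ _

section ExpMoment

variable {Ω : Type*} [MeasurableSpace Ω] {P : Measure Ω} [IsProbabilityMeasure P] {N : Ω → ℝ}
  {lam : ℝ}

theorem lintegral_ofReal_exp_mul_eq_one_add (hN : AEMeasurable N P) (hN0 : 0 ≤ᵐ[P] N)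
    (hlam : 0 ≤ lam) :
    ∫⁻ ω, ENNReal.ofReal (exp (lam * N ω)) ∂P
      = 1 + ∫⁻ t in Ioi 0, P {ω | t < N ω} * ENNReal.ofReal (lam * exp (lam * t)) := by
  have hcont : Continuous fun t => lam * exp (lam * t) := by fun_prop
  rw [← lintegral_comp_eq_lintegral_meas_lt_mul P hN0 hN (fun t _ => hcont.intervalIntegrable 0 t)
    (ae_of_all _ fun t => by positivity)]
  simp_rw [intervalIntegral_mul_exp_mul]
  have hone : (1 : ENNReal) = ∫⁻ _, 1 ∂P := by simp
  rw [hone, ← lintegral_add_left measurable_const]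
  refine lintegral_congr_ae (hN0.mono fun ω hω => ?_)
  have h1 : 1 ≤ exp (lam * N ω) := one_le_exp (mul_nonneg hlam hω)
  dsimp only
  rw [← ENNReal.ofReal_one, ← ENNReal.ofReal_add zero_le_one (by linarith), add_sub_cancel]

theorem setLIntegral_Ioc_meas_lt_mul_exp_le {r : ℝ} (hr : 0 ≤ r) (hlam : 0 ≤ lam) :
    ∫⁻ t in Ioc 0 r, P {ω | t < N ω} * ENNReal.ofReal (lam * exp (lam * t))
      ≤ ENNReal.ofReal (exp (lam * r) - 1) := by
  calc ∫⁻ t in Ioc 0 r, P {ω | t < N ω} * ENNReal.ofReal (lam * exp (lam * t))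
      ≤ ∫⁻ t in Ioc 0 r, ENNReal.ofReal (lam * exp (lam * t)) :=
        lintegral_mono fun t => mul_le_of_le_one_left' prob_le_one
    _ = ENNReal.ofReal (exp (lam * r) - 1) := by
        rw [← ofReal_integral_eq_lintegral_ofReal
          (by fun_prop : Continuous fun t => lam * exp (lam * t)).integrableOn_Ioc
          (ae_of_all _ fun t => by positivity),
          ← intervalIntegral.integral_of_le hr, intervalIntegral_mul_exp_mul]

theorem setLIntegral_Ioi_meas_lt_mul_exp_le {r : ℝ} {h : ℝ → ℝ} (hh : IntegrableOn h (Ioi r))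
    (htail : ∀ t > r, (P {ω | t < N ω}).toReal * (lam * exp (lam * t)) ≤ h t) (hlam : 0 ≤ lam) :
    ∫⁻ t in Ioi r, P {ω | t < N ω} * ENNReal.ofReal (lam * exp (lam * t))
      ≤ ENNReal.ofReal (∫ t in Ioi r, h t) := by
  have hh0 : ∀ t > r, 0 ≤ h t := fun t ht => le_trans (by positivity) (htail t ht)
  rw [ofReal_integral_eq_lintegral_ofReal hh ((ae_restrict_mem measurableSet_Ioi).mono hh0)]
  refine setLIntegral_mono' measurableSet_Ioi fun t ht => ?_
  rw [← ENNReal.ofReal_toReal (measure_ne_top P _), ← ENNReal.ofReal_mul ENNReal.toReal_nonneg]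
  exact ENNReal.ofReal_le_ofReal (htail t ht)

theorem integral_exp_mul_le_of_tail_le (hN : AEMeasurable N P) (hN0 : 0 ≤ᵐ[P] N) (hlam : 0 ≤ lam)
    {r : ℝ} (hr : 0 ≤ r) {h : ℝ → ℝ} (hh : IntegrableOn h (Ioi r))
    (htail : ∀ t > r, (P {ω | t < N ω}).toReal * (lam * exp (lam * t)) ≤ h t) :
    ∫ ω, exp (lam * N ω) ∂P ≤ exp (lam * r) + ∫ t in Ioi r, h t := by
  have hh0 : 0 ≤ ∫ t in Ioi r, h t :=
    setIntegral_nonneg measurableSet_Ioi fun t ht => le_trans (by positivity) (htail t ht)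
  have h1 : 1 ≤ exp (lam * r) := one_le_exp (mul_nonneg hlam hr)
  rw [integral_eq_lintegral_of_nonneg_ae (ae_of_all _ fun ω => (exp_pos _).le)
    (measurable_exp.comp_aemeasurable (hN.const_mul lam)).aestronglyMeasurable]
  refine ENNReal.toReal_le_of_le_ofReal (by positivity) ?_
  calc ∫⁻ ω, ENNReal.ofReal (exp (lam * N ω)) ∂P
      = 1 + ((∫⁻ t in Ioc 0 r, P {ω | t < N ω} * ENNReal.ofReal (lam * exp (lam * t)))
          + ∫⁻ t in Ioi r, P {ω | t < N ω} * ENNReal.ofReal (lam * exp (lam * t))) := by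
        rw [lintegral_ofReal_exp_mul_eq_one_add hN hN0 hlam, ← Ioc_union_Ioi_eq_Ioi hr,
          lintegral_union measurableSet_Ioi (Ioc_disjoint_Ioi le_rfl)]
    _ ≤ ENNReal.ofReal 1 + (ENNReal.ofReal (exp (lam * r) - 1)
          + ENNReal.ofReal (∫ t in Ioi r, h t)) := by
        rw [ENNReal.ofReal_one]
        gcongr
        · exact setLIntegral_Ioc_meas_lt_mul_exp_le hr hlam
        · exact setLIntegral_Ioi_meas_lt_mul_exp_le hh htail hlam
    _ = ENNReal.ofReal (exp (lam * r) + ∫ t in Ioi r, h t) := by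
        rw [← ENNReal.ofReal_add (by linarith) hh0,
          ← ENNReal.ofReal_add zero_le_one (by positivity)]
        congr 1
        ring

end ExpMoment

theorem exp_mul_sub_mul_sq_eq {a : ℝ} (ha : a ≠ 0) (b t : ℝ) :
    exp (b * t - a * t ^ 2) = exp (b ^ 2 / (4 * a)) * exp (-a * (t - b / (2 * a)) ^ 2) := by
  rw [← exp_add]
  congr 1
  field_simp
  ring

theorem integrable_exp_mul_sub_mul_sq {a : ℝ} (ha : 0 < a) (b : ℝ) :
    Integrable fun t => exp (b * t - a * t ^ 2) := by
  simp_rw [exp_mul_sub_mul_sq_eq ha.ne' b]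
  exact ((integrable_exp_neg_mul_sq ha).comp_sub_right _).const_mul _

theorem integral_exp_mul_sub_mul_sq {a : ℝ} (ha : a ≠ 0) (b : ℝ) :
    ∫ t, exp (b * t - a * t ^ 2) = √(π / a) * exp (b ^ 2 / (4 * a)) := by
  simp_rw [exp_mul_sub_mul_sq_eq ha b]
  rw [integral_const_mul, integral_sub_right_eq_self (fun t => exp (-a * t ^ 2)),
    integral_gaussian, mul_comm]

/-- exponential moment bound from a Gaussian-type tail estimate
(simplified form). -/
theorem exp_moment_bound_of_gaussian_tail'
    (Ω : Type*) [MeasurableSpace Ω] (P : Measure Ω) [IsProbabilityMeasure P]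
    (N : Ω → ℝ) (hNmeas : Measurable N) (hNnonneg : ∀ ω, 0 ≤ N ω)
    (σ lam r₀ α : ℝ) (hσ : 0 < σ) (hlam : 0 < lam) (hr₀ : 0 ≤ r₀) (hα : 0 ≤ α)
    (htail : ∀ r : ℝ, r₀ ≤ r →
      (P {ω | r < N ω}).toReal ≤ 1 - stdNormalCDF (α + r / (2 * σ))) :
    ∫ ω, Real.exp (lam * N ω) ∂P
      ≤ Real.exp (lam * r₀)
        + Real.sqrt (2 * Real.pi) * σ * lam * Real.exp (2 * lam^2 * σ^2) := by
  set a : ℝ := (8 * σ ^ 2)⁻¹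
  have ha : 0 < a := by positivity
  have hbound : ∀ t > r₀, (P {ω | t < N ω}).toReal * (lam * exp (lam * t))
      ≤ lam / 2 * exp (lam * t - a * t ^ 2) := fun t ht => by
    calc (P {ω | t < N ω}).toReal * (lam * exp (lam * t))
        ≤ exp (-a * t ^ 2) / 2 * (lam * exp (lam * t)) := by
          gcongr
          exact (htail t ht.le).trans (one_sub_stdNormalCDF_add_div_le hα hσ (hr₀.trans ht.le))
      _ = lam / 2 * exp (lam * t - a * t ^ 2) := by
          rw [sub_eq_add_neg, exp_add, neg_mul]
          ring
  have hint : Integrable fun t => lam / 2 * exp (lam * t - a * t ^ 2) :=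
    (integrable_exp_mul_sub_mul_sq ha lam).const_mul _
  have hsqrt : √(π / a) = 2 * σ * √(2 * π) := by
    rw [show π / a = (2 * σ) ^ 2 * (2 * π) by simp only [a]; field_simp; ring,
      sqrt_mul (sq_nonneg _), sqrt_sq (by positivity)]
  calc ∫ ω, exp (lam * N ω) ∂P
      ≤ exp (lam * r₀) + ∫ t in Ioi r₀, lam / 2 * exp (lam * t - a * t ^ 2) :=
        integral_exp_mul_le_of_tail_le hNmeas.aemeasurable (ae_of_all _ hNnonneg) hlam.le hr₀
          hint.integrableOn hbound
    _ ≤ exp (lam * r₀) + ∫ t, lam / 2 * exp (lam * t - a * t ^ 2) :=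
        add_le_add_right (setIntegral_le_integral hint (ae_of_all _ fun t => by positivity)) _
    _ = exp (lam * r₀) + √(2 * π) * σ * lam * exp (2 * lam ^ 2 * σ ^ 2) := by
        rw [integral_const_mul, integral_exp_mul_sub_mul_sq ha.ne', hsqrt]
        simp only [a]
        field_simp
        ring_nf
end
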